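/- Let k be a positive integer and let (a_i)_{i≥1}, (b_i)_{i≥1}, (d_i)_{1≤i≤k} be bounded sequences of nonnegative reals with a_i < 1 for all i. On ℓ²(ℕ, ℂ) with standard orthonormal basis (e_i), let T1 and T2 be the backward weighted shifts T1 e_0 = T2 e_0 = 0, T1 e_i = a_i e_{i−1}, T2 e_i = b_i e_{i−1} (i ≥ 1), and let T12 be the diagonal operator T12 e_{i−1} = d_i e_{i−1} for 1 ≤ i ≤ k and T12 e_j = 0 for j ≥ k. Then the block operator T = [[T1, T12],[0, T2]] on ℓ²(ℕ,ℂ) ⊕ ℓ²(ℕ,ℂ) is a contraction if and only if d_1² ≤ 1 − a_1², d_i² ≤ (1 − a_i²)(1 − b_{i−1}²) for 2 ≤ i ≤ k, and b_j ≤ 1 for all j ≥ k. -/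

import Mathlib

/-!
In the coordinates `(x, y)`, `T` only couples `(x (n + 1), y n)` with
`((T (x, y)).1 n, (T (x, y)).2 (n - 1))`, through the `2 × 2` matrix
`[[a (n + 1), d (n + 1)], [0, b n]]` (with `d (n + 1) = 0` for `n ≥ k` and `b 0 = 0`), and it
kills `x 0`. So `T` is an orthogonal sum of these blocks and is a contraction iff each block is.
For `|α| < 1`, the block `[[α, δ], [0, β]]` is a contraction iff `δ² ≤ (1 - α²)(1 - β²)`:
completing the square in the first variable gives
`(1 - α²) (s² + t² - (α s + δ t)² - (β t)²) = ((1 - α²) s - α δ t)² + t² ((1 - α²)(1 - β²) - δ²)`.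
-/

open ContinuousLinearMap

noncomputable section

local notation "ℓ²" => lp (fun _ : ℕ => ℂ) 2

open scoped ENNReal

lemma sq_add_sq_le_of_sq_le_mul {α β δ : ℝ} (hα : α ^ 2 < 1)
    (h : δ ^ 2 ≤ (1 - α ^ 2) * (1 - β ^ 2)) (s t : ℝ) :
    (α * s + δ * t) ^ 2 + (β * t) ^ 2 ≤ s ^ 2 + t ^ 2 := by
  have hu : 0 < 1 - α ^ 2 := by linarith
  have key : (1 - α ^ 2) * (s ^ 2 + t ^ 2 - ((α * s + δ * t) ^ 2 + (β * t) ^ 2)) =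
      ((1 - α ^ 2) * s - α * δ * t) ^ 2 + t ^ 2 * ((1 - α ^ 2) * (1 - β ^ 2) - δ ^ 2) := by
    ring
  have : 0 ≤ (1 - α ^ 2) * (s ^ 2 + t ^ 2 - ((α * s + δ * t) ^ 2 + (β * t) ^ 2)) := by
    rw [key]
    exact add_nonneg (sq_nonneg _) (mul_nonneg (sq_nonneg t) (sub_nonneg.mpr h))
  linarith [(mul_nonneg_iff_of_pos_left hu).mp this]

lemma norm_sq_add_norm_sq_le_iff {α β δ : ℝ} (hα : α ^ 2 < 1) :
    (∀ s t : ℂ, ‖(α : ℂ) * s + δ * t‖ ^ 2 + ‖(β : ℂ) * t‖ ^ 2 ≤ ‖s‖ ^ 2 + ‖t‖ ^ 2) ↔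
      δ ^ 2 ≤ (1 - α ^ 2) * (1 - β ^ 2) := by
  have hu : 0 < 1 - α ^ 2 := by linarith
  constructor
  · intro h
    -- `s = α δ / (1 - α²)` minimises `s² - (α s + δ)²`.
    have key := h (α * δ / (1 - α ^ 2) : ℝ) 1
    have hs : α * (α * δ / (1 - α ^ 2)) + δ = δ / (1 - α ^ 2) := by field_simp; ring
    have hsq : (δ / (1 - α ^ 2)) ^ 2 - (α * δ / (1 - α ^ 2)) ^ 2 = δ ^ 2 / (1 - α ^ 2) := by
      field_simp
    norm_cast at key
    simp only [Real.norm_eq_abs, sq_abs, mul_one, one_pow, hs] at key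
    have : δ ^ 2 / (1 - α ^ 2) ≤ 1 - β ^ 2 := by linarith
    rw [div_le_iff₀ hu] at this
    linarith
  · intro h s t
    have hle : ‖(α : ℂ) * s + δ * t‖ ≤ |α| * ‖s‖ + |δ| * ‖t‖ := by
      refine (norm_add_le _ _).trans ?_
      simp [Complex.norm_real]
    have := sq_add_sq_le_of_sq_le_mul (α := |α|) (β := |β|) (δ := |δ|) (by simpa using hα)
      (by simpa using h) ‖s‖ ‖t‖
    rw [norm_mul, Complex.norm_real, Real.norm_eq_abs]
    nlinarith [pow_le_pow_left₀ (norm_nonneg _) hle 2]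

namespace lp

variable {𝕜 : Type*} [NontriviallyNormedField 𝕜] {p : ℝ≥0∞} [Fact (1 ≤ p)]

theorem hasSum_map_apply {ι κ : Type*} [DecidableEq ι] (hp : p ≠ ⊤)
    (S : lp (fun _ : ι => 𝕜) p →L[𝕜] lp (fun _ : κ => 𝕜) p) (f : lp (fun _ : ι => 𝕜) p) (j : κ) :
    HasSum (fun i => f i * S (lp.single p i 1) j) (S f j) := by
  have hsingle : ∀ i, (lp.single p i (f i) : lp (fun _ : ι => 𝕜) p) = f i • lp.single p i 1 :=
    fun i => by rw [← lp.single_smul, smul_eq_mul, mul_one]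
  have := (lp.hasSum_single hp f).mapL ((lp.evalCLM 𝕜 _ p j).comp S)
  simp only [hsingle, map_smul, smul_eq_mul] at this
  exact this

theorem apply_eq_of_single_eq_smul_single {ι : Type*} [DecidableEq ι] (hp : p ≠ ⊤)
    {S : lp (fun _ : ι => 𝕜) p →L[𝕜] lp (fun _ : ι => 𝕜) p} {c : ι → 𝕜}
    (hS : ∀ i, S (lp.single p i 1) = c i • lp.single p i 1) (f : lp (fun _ : ι => 𝕜) p) (i : ι) :
    S f i = c i * f i := by
  refine ((hasSum_map_apply hp S f i).unique (hasSum_single i fun j hj => ?_)).trans ?_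
  · simp [hS, hj.symm]
  · simp [hS, mul_comm]

theorem apply_eq_of_backwardShift (hp : p ≠ ⊤)
    {S : lp (fun _ : ℕ => 𝕜) p →L[𝕜] lp (fun _ : ℕ => 𝕜) p} {c : ℕ → 𝕜}
    (h0 : S (lp.single p 0 1) = 0) (hS : ∀ n, S (lp.single p (n + 1) 1) = c n • lp.single p n 1)
    (f : lp (fun _ : ℕ => 𝕜) p) (n : ℕ) :
    S f n = c n * f (n + 1) := by
  refine ((hasSum_map_apply hp S f n).unique (hasSum_single (n + 1) fun m hm => ?_)).trans ?_
  · cases m with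
    | zero => simp [h0]
    | succ m => simp [hS, show n ≠ m by omega]
  · simp [hS, mul_comm]

theorem hasSum_norm_sq {ι : Type*} {E : ι → Type*} [∀ i, NormedAddCommGroup (E i)] (f : lp E 2) :
    HasSum (fun i => ‖f i‖ ^ 2) (‖f‖ ^ 2) := by
  simpa using lp.hasSum_norm (p := 2) (by norm_num) f

end lp

lemma WithLp.norm_sq_equiv_symm_prod {E F : Type*} [SeminormedAddCommGroup E]
    [SeminormedAddCommGroup F] (x : E) (y : F) :
    ‖(WithLp.equiv 2 (E × F)).symm (x, y)‖ ^ 2 = ‖x‖ ^ 2 + ‖y‖ ^ 2 :=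
  WithLp.prod_norm_sq_eq_of_L2 _

lemma opNorm_le_one_iff_of_block {𝕜 E F : Type*} [NontriviallyNormedField 𝕜]
    [NormedAddCommGroup E] [NormedSpace 𝕜 E] [NormedAddCommGroup F] [NormedSpace 𝕜 F]
    (T : WithLp 2 (E × F) →L[𝕜] WithLp 2 (E × F)) (T₁ : E → E) (T₁₂ : F → E) (T₂ : F → F)
    (hT : ∀ x y, T ((WithLp.equiv 2 (E × F)).symm (x, y)) =
      (WithLp.equiv 2 (E × F)).symm (T₁ x + T₁₂ y, T₂ y)) :
    ‖T‖ ≤ 1 ↔ ∀ x y, ‖T₁ x + T₁₂ y‖ ^ 2 + ‖T₂ y‖ ^ 2 ≤ ‖x‖ ^ 2 + ‖y‖ ^ 2 := by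
  have hcontr : ∀ x y, ‖T ((WithLp.equiv 2 (E × F)).symm (x, y))‖ ≤
      ‖(WithLp.equiv 2 (E × F)).symm (x, y)‖ ↔
      ‖T₁ x + T₁₂ y‖ ^ 2 + ‖T₂ y‖ ^ 2 ≤ ‖x‖ ^ 2 + ‖y‖ ^ 2 := fun x y => by
    rw [← pow_le_pow_iff_left₀ (norm_nonneg _) (norm_nonneg _) two_ne_zero, hT,
      WithLp.norm_sq_equiv_symm_prod, WithLp.norm_sq_equiv_symm_prod]
  constructor
  · intro h x y
    exact (hcontr x y).mp ((T.le_opNorm _).trans (mul_le_of_le_one_left (norm_nonneg _) h))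
  · intro h
    refine T.opNorm_le_bound zero_le_one fun v => ?_
    rw [one_mul, ← (WithLp.equiv 2 (E × F)).symm_apply_apply v]
    exact (hcontr _ _).mpr (h _ _)

lemma norm_sq_add_norm_sq_le_of_blocks {α δ β : ℕ → ℝ} (hβ0 : β 0 = 0)
    {T₁ T₂ T₁₂ : ℓ² →L[ℂ] ℓ²}
    (hT₁0 : T₁ (lp.single 2 0 1) = 0)
    (hT₁ : ∀ n, T₁ (lp.single 2 (n + 1) 1) = (α n : ℂ) • lp.single 2 n 1)
    (hT₂0 : T₂ (lp.single 2 0 1) = 0)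
    (hT₂ : ∀ n, T₂ (lp.single 2 (n + 1) 1) = (β (n + 1) : ℂ) • lp.single 2 n 1)
    (hT₁₂ : ∀ n, T₁₂ (lp.single 2 n 1) = (δ n : ℂ) • lp.single 2 n 1)
    (hblock : ∀ n (s t : ℂ),
      ‖(α n : ℂ) * s + δ n * t‖ ^ 2 + ‖(β n : ℂ) * t‖ ^ 2 ≤ ‖s‖ ^ 2 + ‖t‖ ^ 2)
    (x y : ℓ²) :
    ‖T₁ x + T₁₂ y‖ ^ 2 + ‖T₂ y‖ ^ 2 ≤ ‖x‖ ^ 2 + ‖y‖ ^ 2 := by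
  have hp : (2 : ℝ≥0∞) ≠ ⊤ := ENNReal.ofNat_ne_top
  have hu : ∀ n, (T₁ x + T₁₂ y) n = α n * x (n + 1) + δ n * y n := fun n => by
    rw [lp.coeFn_add, Pi.add_apply, lp.apply_eq_of_backwardShift hp hT₁0 hT₁,
      lp.apply_eq_of_single_eq_smul_single hp hT₁₂]
  have hU := lp.hasSum_norm_sq (T₁ x + T₁₂ y)
  simp only [hu] at hU
  -- `β 0 = 0` lets the weight of `T₂` be attached to the source coordinate `y n`.
  have hW : HasSum (fun n => ‖(β n : ℂ) * y n‖ ^ 2) (‖T₂ y‖ ^ 2) := by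
    rw [← hasSum_nat_add_iff' 1]
    simpa [hβ0, lp.apply_eq_of_backwardShift hp hT₂0 hT₂] using lp.hasSum_norm_sq (T₂ y)
  have hX : HasSum (fun n => ‖x (n + 1)‖ ^ 2) (‖x‖ ^ 2 - ‖x 0‖ ^ 2) := by
    simpa using (hasSum_nat_add_iff' 1).mpr (lp.hasSum_norm_sq x)
  have := hasSum_le (fun n => hblock n (x (n + 1)) (y n)) (hU.add hW)
    (hX.add (lp.hasSum_norm_sq y))
  linarith [sq_nonneg ‖x 0‖]

lemma blocks_of_norm_sq_add_norm_sq_le {α δ β : ℕ → ℝ} (hβ0 : β 0 = 0)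
    {T₁ T₂ T₁₂ : ℓ² →L[ℂ] ℓ²}
    (hT₁ : ∀ n, T₁ (lp.single 2 (n + 1) 1) = (α n : ℂ) • lp.single 2 n 1)
    (hT₂0 : T₂ (lp.single 2 0 1) = 0)
    (hT₂ : ∀ n, T₂ (lp.single 2 (n + 1) 1) = (β (n + 1) : ℂ) • lp.single 2 n 1)
    (hT₁₂ : ∀ n, T₁₂ (lp.single 2 n 1) = (δ n : ℂ) • lp.single 2 n 1)
    (h : ∀ x y : ℓ², ‖T₁ x + T₁₂ y‖ ^ 2 + ‖T₂ y‖ ^ 2 ≤ ‖x‖ ^ 2 + ‖y‖ ^ 2) (n : ℕ) (s t : ℂ) :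
    ‖(α n : ℂ) * s + δ n * t‖ ^ 2 + ‖(β n : ℂ) * t‖ ^ 2 ≤ ‖s‖ ^ 2 + ‖t‖ ^ 2 := by
  have hsingle : ∀ i (c : ℂ), (lp.single 2 i c : ℓ²) = c • lp.single 2 i 1 := fun i c => by
    rw [← lp.single_smul, smul_eq_mul, mul_one]
  have h₁ : T₁ (lp.single 2 (n + 1) s) + T₁₂ (lp.single 2 n t) =
      ((α n : ℂ) * s + δ n * t) • lp.single 2 n 1 := by
    rw [hsingle, hsingle n, map_smul, map_smul, hT₁, hT₁₂, smul_smul, smul_smul, ← add_smul,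
      mul_comm s, mul_comm t]
  have h₂ : ‖T₂ (lp.single 2 n t)‖ = ‖(β n : ℂ) * t‖ := by
    cases n with
    | zero => simp [hsingle 0 t, hT₂0, hβ0]
    | succ n =>
      rw [hsingle, map_smul, hT₂, smul_smul, norm_smul, lp.norm_single (by norm_num), norm_one,
        mul_one, mul_comm]
  simpa [h₁, h₂, norm_smul] using h (lp.single 2 (n + 1) s) (lp.single 2 n t)

theorem blockShift_contraction_iff {α δ β : ℕ → ℝ} (hα : ∀ n, α n ^ 2 < 1) (hβ0 : β 0 = 0)
    {T₁ T₂ T₁₂ : ℓ² →L[ℂ] ℓ²}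
    (hT₁0 : T₁ (lp.single 2 0 1) = 0)
    (hT₁ : ∀ n, T₁ (lp.single 2 (n + 1) 1) = (α n : ℂ) • lp.single 2 n 1)
    (hT₂0 : T₂ (lp.single 2 0 1) = 0)
    (hT₂ : ∀ n, T₂ (lp.single 2 (n + 1) 1) = (β (n + 1) : ℂ) • lp.single 2 n 1)
    (hT₁₂ : ∀ n, T₁₂ (lp.single 2 n 1) = (δ n : ℂ) • lp.single 2 n 1) :
    (∀ x y : ℓ², ‖T₁ x + T₁₂ y‖ ^ 2 + ‖T₂ y‖ ^ 2 ≤ ‖x‖ ^ 2 + ‖y‖ ^ 2) ↔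
      ∀ n, δ n ^ 2 ≤ (1 - α n ^ 2) * (1 - β n ^ 2) := by
  simp only [← norm_sq_add_norm_sq_le_iff (hα _)]
  exact ⟨blocks_of_norm_sq_add_norm_sq_le hβ0 hT₁ hT₂0 hT₂ hT₁₂,
    norm_sq_add_norm_sq_le_of_blocks hβ0 hT₁0 hT₁ hT₂0 hT₂ hT₁₂⟩

lemma forall_blockCondition_iff {k : ℕ} (hk : 1 ≤ k) {a b d : ℕ → ℝ}
    (ha : ∀ n, a (n + 1) ^ 2 < 1) (hb : ∀ i, 1 ≤ i → 0 ≤ b i) :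
    (∀ n, (if n < k then d (n + 1) else 0) ^ 2 ≤
        (1 - a (n + 1) ^ 2) * (1 - (if n = 0 then 0 else b n) ^ 2)) ↔
      (d 1 ^ 2 ≤ 1 - a 1 ^ 2 ∧
       (∀ i, 2 ≤ i → i ≤ k → d i ^ 2 ≤ (1 - a i ^ 2) * (1 - b (i - 1) ^ 2)) ∧
       ∀ j, k ≤ j → b j ≤ 1) := by
  have htail : ∀ n, 0 ≤ (1 - a (n + 2) ^ 2) * (1 - b (n + 1) ^ 2) ↔ b (n + 1) ≤ 1 := fun n => by
    rw [mul_nonneg_iff_of_pos_left (by linarith [ha (n + 1)]), sub_nonneg,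
      sq_le_one_iff₀ (hb _ n.succ_pos)]
  constructor
  · intro h
    refine ⟨by simpa [show 0 < k from hk] using h 0, fun i hi2 hik => ?_, fun j hj => ?_⟩
    · obtain ⟨n, rfl⟩ : ∃ n, i = n + 2 := ⟨i - 2, by omega⟩
      simpa [show n + 1 < k by omega] using h (n + 1)
    · obtain ⟨n, rfl⟩ : ∃ n, j = n + 1 := ⟨j - 1, by omega⟩
      simpa [show ¬n + 1 < k by omega, htail] using h (n + 1)
  · rintro ⟨h₁, hmid, htail'⟩ (_ | n)
    · simpa [show 0 < k from hk] using h₁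
    · by_cases hn : n + 1 < k
      · simpa [hn] using hmid (n + 2) (by omega) (by omega)
      · simpa [hn, htail] using htail' (n + 1) (by omega)

theorem stmt_18_general (k : ℕ) (hk : 1 ≤ k)
    (a b d : ℕ → ℝ)
    (ha : ∀ i, 1 ≤ i → 0 ≤ a i ∧ a i < 1)
    (hb : ∀ i, 1 ≤ i → 0 ≤ b i)
    (T₁ T₂ T₁₂ : ℓ² →L[ℂ] ℓ²)
    (hT₁0 : T₁ (lp.single 2 0 1) = 0)
    (hT₁ : ∀ i : ℕ, T₁ (lp.single 2 (i + 1) 1) = (a (i + 1) : ℂ) • lp.single 2 i 1)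
    (hT₂0 : T₂ (lp.single 2 0 1) = 0)
    (hT₂ : ∀ i : ℕ, T₂ (lp.single 2 (i + 1) 1) = (b (i + 1) : ℂ) • lp.single 2 i 1)
    (hT₁₂ : ∀ j : ℕ, j < k → T₁₂ (lp.single 2 j 1) = (d (j + 1) : ℂ) • lp.single 2 j 1)
    (hT₁₂0 : ∀ j : ℕ, k ≤ j → T₁₂ (lp.single 2 j 1) = 0)
    (T : WithLp 2 (ℓ² × ℓ²) →L[ℂ] WithLp 2 (ℓ² × ℓ²))
    (hT : ∀ (x y : ℓ²),
      T ((WithLp.equiv 2 (ℓ² × ℓ²)).symm (x, y)) =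
        (WithLp.equiv 2 (ℓ² × ℓ²)).symm (T₁ x + T₁₂ y, T₂ y)) :
    ‖T‖ ≤ 1 ↔
      (d 1 ^ 2 ≤ 1 - a 1 ^ 2 ∧
       (∀ i, 2 ≤ i → i ≤ k → d i ^ 2 ≤ (1 - a i ^ 2) * (1 - b (i - 1) ^ 2)) ∧
       ∀ j, k ≤ j → b j ≤ 1) := by
  have hα : ∀ n, a (n + 1) ^ 2 < 1 := fun n => by
    obtain ⟨h0, h1⟩ := ha (n + 1) n.succ_pos
    nlinarith
  have hT₁₂' : ∀ n, T₁₂ (lp.single 2 n 1) =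
      ((if n < k then d (n + 1) else 0 : ℝ) : ℂ) • lp.single 2 n 1 := fun n => by
    split_ifs with hn
    · exact hT₁₂ n hn
    · simp [hT₁₂0 n (not_lt.mp hn)]
  rw [opNorm_le_one_iff_of_block T T₁ T₁₂ T₂ hT,
    blockShift_contraction_iff (β := fun n => if n = 0 then 0 else b n) hα rfl hT₁0 hT₁ hT₂0
      hT₂ hT₁₂']
  exact forall_blockCondition_iff hk hα hb

theorem stmt_18 (k : ℕ) (hk : 1 ≤ k)
    (a b d : ℕ → ℝ)
    (ha : ∀ i, 1 ≤ i → 0 ≤ a i ∧ a i < 1)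
    (hb : ∀ i, 1 ≤ i → 0 ≤ b i)
    (hbbdd : ∃ C : ℝ, ∀ i, 1 ≤ i → b i ≤ C)
    (hd : ∀ i, 1 ≤ i → i ≤ k → 0 ≤ d i)
    (T₁ T₂ T₁₂ : ℓ² →L[ℂ] ℓ²)
    (hT₁0 : T₁ (lp.single 2 0 1) = 0)
    (hT₁ : ∀ i : ℕ, T₁ (lp.single 2 (i + 1) 1) = (a (i + 1) : ℂ) • lp.single 2 i 1)
    (hT₂0 : T₂ (lp.single 2 0 1) = 0)
    (hT₂ : ∀ i : ℕ, T₂ (lp.single 2 (i + 1) 1) = (b (i + 1) : ℂ) • lp.single 2 i 1)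
    (hT₁₂ : ∀ j : ℕ, j < k → T₁₂ (lp.single 2 j 1) = (d (j + 1) : ℂ) • lp.single 2 j 1)
    (hT₁₂0 : ∀ j : ℕ, k ≤ j → T₁₂ (lp.single 2 j 1) = 0)
    (T : WithLp 2 (ℓ² × ℓ²) →L[ℂ] WithLp 2 (ℓ² × ℓ²))
    (hT : ∀ (x y : ℓ²),
      T ((WithLp.equiv 2 (ℓ² × ℓ²)).symm (x, y)) =
        (WithLp.equiv 2 (ℓ² × ℓ²)).symm (T₁ x + T₁₂ y, T₂ y)) :
    ‖T‖ ≤ 1 ↔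
      (d 1 ^ 2 ≤ 1 - a 1 ^ 2 ∧
       (∀ i, 2 ≤ i → i ≤ k → d i ^ 2 ≤ (1 - a i ^ 2) * (1 - b (i - 1) ^ 2)) ∧
       ∀ j, k ≤ j → b j ≤ 1) :=
  stmt_18_general k hk a b d ha hb T₁ T₂ T₁₂ hT₁0 hT₁ hT₂0 hT₂ hT₁₂ hT₁₂0 T hT
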